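/- arXiv:1403.0787 — 2 statements merged into one kernel-verified Lean document; each statement's English description precedes it below -/
import Mathlib

section
/- Let α be a positive rational number and suppose there exist integers r, s, t with r ≠ 0 such that α^r = 10^s·2^t. Then there exist integers u and v such that α = 2^u·5^v (indeed r·u = s + t and r·v = s). -/
private lemma padicValRat_zpow {p : ℕ} [Fact p.Prime] {q : ℚ} (hq : q ≠ 0) (k : ℤ) :
    padicValRat p (q ^ k) = k * padicValRat p q := by
  obtain ⟨n⟩ | ⟨n⟩ := k
  · simpa using padicValRat.pow (p := p) hq (k := n)
  · rw [zpow_negSucc, padicValRat.inv, padicValRat.pow q]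
    rw [Int.negSucc_eq]
    push_cast
    ring

theorem alpha_eq_two_five (α : ℚ) (hα : 0 < α) (r s t : ℤ) (hr : r ≠ 0)
    (h : (α : ℝ) ^ r = (10 : ℝ) ^ s * (2 : ℝ) ^ t) :
    ∃ u v : ℤ, (α : ℝ) = (2 : ℝ) ^ u * (5 : ℝ) ^ v ∧ r * u = s + t ∧ r * v = s := by
  have hα0 : α ≠ 0 := ne_of_gt hα
  have h' : (α : ℝ) ^ r = (2 : ℝ) ^ (s + t) * (5 : ℝ) ^ s := by
    rw [h, show (10 : ℝ) = 2 * 5 by norm_num, mul_zpow,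
      zpow_add₀ (two_ne_zero)]
    ring
  have hQ : α ^ r = (2 : ℚ) ^ (s + t) * (5 : ℚ) ^ s := by
    have : ((α ^ r : ℚ) : ℝ) = (((2 : ℚ) ^ (s + t) * (5 : ℚ) ^ s : ℚ) : ℝ) := by
      push_cast
      rw [h']
    exact_mod_cast this
  haveI : Fact (Nat.Prime 2) := ⟨by norm_num⟩
  haveI : Fact (Nat.Prime 5) := ⟨by norm_num⟩
  have h2ne : (2 : ℚ) ≠ 0 := by norm_num
  have h5ne : (5 : ℚ) ≠ 0 := by norm_num
  have hv22 : padicValRat 2 (2 : ℚ) = 1 := by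
    simpa using padicValRat.self (p := 2) (by norm_num)
  have hv55 : padicValRat 5 (5 : ℚ) = 1 := by
    simpa using padicValRat.self (p := 5) (by norm_num)
  have hv25 : padicValRat 2 (5 : ℚ) = 0 := by
    have h0 : padicValNat 2 5 = 0 := padicValNat_primes (by norm_num)
    have : padicValRat 2 ((5 : ℕ) : ℚ) = padicValNat 2 5 := padicValRat.of_nat
    rw [h0] at this
    simpa using this
  have hv52 : padicValRat 5 (2 : ℚ) = 0 := by
    have h0 : padicValNat 5 2 = 0 := padicValNat_primes (by norm_num)
    have : padicValRat 5 ((2 : ℕ) : ℚ) = padicValNat 5 2 := padicValRat.of_nat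
    rw [h0] at this
    simpa using this
  set u := padicValRat 2 α with hu
  set v := padicValRat 5 α with hv
  have hru : r * u = s + t := by
    have := congrArg (padicValRat 2) hQ
    rwa [padicValRat_zpow hα0, padicValRat.mul (zpow_ne_zero _ h2ne) (zpow_ne_zero _ h5ne),
      padicValRat_zpow h2ne, padicValRat_zpow h5ne, hv22, hv25, mul_one, mul_zero,
      add_zero] at this
  have hrv : r * v = s := by
    have := congrArg (padicValRat 5) hQ
    rwa [padicValRat_zpow hα0, padicValRat.mul (zpow_ne_zero _ h2ne) (zpow_ne_zero _ h5ne),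
      padicValRat_zpow h2ne, padicValRat_zpow h5ne, hv55, hv52, mul_one, mul_zero,
      zero_add] at this
  refine ⟨u, v, ?_, hru, hrv⟩
  have hr' : (r : ℝ) ≠ 0 := Int.cast_ne_zero.mpr hr
  have cancel : ∀ x : ℝ, 0 < x → (x ^ r) ^ ((r : ℝ)⁻¹) = x := by
    intro x hx
    rw [← Real.rpow_intCast x r, ← Real.rpow_mul hx.le, mul_inv_cancel₀ hr', Real.rpow_one]
  have key : (α : ℝ) ^ r = ((2 : ℝ) ^ u * (5 : ℝ) ^ v) ^ r := by
    rw [mul_zpow, ← zpow_mul, ← zpow_mul, mul_comm u r, mul_comm v r, hru, hrv, h']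
  have hαpos : (0 : ℝ) < (α : ℝ) := by exact_mod_cast hα
  have hypos : (0 : ℝ) < (2 : ℝ) ^ u * (5 : ℝ) ^ v := by positivity
  have := congrArg (fun x : ℝ => x ^ ((r : ℝ)⁻¹)) key
  rwa [cancel _ hαpos, cancel _ hypos] at this
end

section
/- Let 2 ≤ h < g be integers with h dividing g. Let n ≥ m+1 be positive integers and let N be a palindrome in base g of the form N = a·g^n + Σ_{i=0}^{n−m−1} a_i g^i with digits a_i ∈ {0,…,g−1}, where g^{n−m−1} ≤ a < g^{n−m}, and assume m > log(ga)/log h. Set b = rev_h(rev_g(a)), k = ⌊(log N − log b)/log h⌋, and m̃ = m + ⌊log(rev_g(a))/log g⌋ − ⌊log b/log h⌋. If N is also a palindrome in base h, then b·h^k < N < b·h^k + h^{k − m̃}. -/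
/-- The digit-reversal of `a` in base `b`. -/
def revDigits (b a : ℕ) : ℕ := Nat.ofDigits b ((Nat.digits b a).reverse)

/-- `a` is a palindrome in base `b`. -/
def IsPalindromeBase (b a : ℕ) : Prop := Nat.digits b a = (Nat.digits b a).reverse

/-- `u` and `v` are multiplicatively independent. -/
def MulIndep (u v : ℕ) : Prop := ∀ x y : ℕ, u ^ x = v ^ y → x = 0 ∧ y = 0

lemma len_le_of_lt_pow {p x i : ℕ} (hp : 2 ≤ p) (hx : x < p ^ i) :
    (Nat.digits p x).length ≤ i := by
  rcases Nat.eq_zero_or_pos x with rfl | hx0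
  · simp
  rw [Nat.digits_len p x (by omega) hx0.ne']
  have := (Nat.log_lt_iff_lt_pow (by omega : 1 < p) hx0.ne').mpr hx
  omega

lemma lt_len_of_pow_le {p x i : ℕ} (hp : 2 ≤ p) (hx : p ^ i ≤ x) :
    i < (Nat.digits p x).length := by
  by_contra hc
  push_neg at hc
  have h1 : x < p ^ (Nat.digits p x).length := Nat.lt_base_pow_length_digits (by omega)
  have := Nat.pow_le_pow_right (by omega : 1 ≤ p) hc
  omega

lemma mod_pow_digits (p i x : ℕ) (hp : 2 ≤ p) :
    x % p ^ i = Nat.ofDigits p ((Nat.digits p x).take i) := by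
  have hlt : Nat.ofDigits p ((Nat.digits p x).take i) < p ^ ((Nat.digits p x).take i).length :=
    Nat.ofDigits_lt_base_pow_length (by omega)
      (fun y hy => Nat.digits_lt_base (by omega) (List.mem_of_mem_take hy))
  rcases le_or_gt i (Nat.digits p x).length with hil | hil
  · have hx : x = Nat.ofDigits p ((Nat.digits p x).take i)
        + p ^ ((Nat.digits p x).take i).length
          * Nat.ofDigits p ((Nat.digits p x).drop i) := by
      conv_lhs => rw [← Nat.ofDigits_digits p x, ← List.take_append_drop i (Nat.digits p x)]
      rw [Nat.ofDigits_append]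
    have hlen : ((Nat.digits p x).take i).length = i := by simp [hil]
    rw [hlen] at hx hlt
    conv_lhs => rw [hx]
    rw [Nat.add_mul_mod_self_left, Nat.mod_eq_of_lt hlt]
  · have htake : (Nat.digits p x).take i = Nat.digits p x := List.take_of_length_le hil.le
    rw [htake, Nat.ofDigits_digits]
    refine Nat.mod_eq_of_lt ?_
    calc x < p ^ (Nat.digits p x).length := Nat.lt_base_pow_length_digits (by omega)
    _ ≤ p ^ i := Nat.pow_le_pow_right (by omega) hil.le

lemma floor_log_div (p x : ℕ) (hp : 2 ≤ p) (hx : x ≠ 0) :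
    ⌊Real.log x / Real.log p⌋ = (Nat.log p x : ℤ) := by
  have hp1 : (1:ℝ) < (p:ℝ) := by exact_mod_cast (by omega : 1 < p)
  have hlogp : 0 < Real.log p := Real.log_pos hp1
  have h1 : (p:ℝ) ^ Nat.log p x ≤ (x:ℝ) := by exact_mod_cast Nat.pow_log_le_self p hx
  have h2 : (x:ℝ) < (p:ℝ) ^ (Nat.log p x + 1) := by
    exact_mod_cast Nat.lt_pow_succ_log_self (by omega : 1 < p) x
  have hx0 : (0:ℝ) < (x:ℝ) := by
    have : 0 < x := Nat.pos_of_ne_zero hx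
    exact_mod_cast this
  have hl1 : (Nat.log p x : ℝ) * Real.log p ≤ Real.log x := by
    calc (Nat.log p x : ℝ) * Real.log p = Real.log ((p:ℝ) ^ Nat.log p x) := by
          rw [Real.log_pow]
    _ ≤ Real.log x := Real.log_le_log (by positivity) h1
  have hl2 : Real.log x < ((Nat.log p x : ℝ) + 1) * Real.log p := by
    calc Real.log x < Real.log ((p:ℝ) ^ (Nat.log p x + 1)) :=
          Real.log_lt_log hx0 h2
    _ = ((Nat.log p x : ℝ) + 1) * Real.log p := by rw [Real.log_pow]; push_cast; ring
  rw [Int.floor_eq_iff]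
  constructor
  · push_cast
    rw [le_div_iff₀ hlogp]
    exact hl1
  · push_cast
    rw [div_lt_iff₀ hlogp]
    exact hl2

lemma floor_sub_log (p c x K : ℕ) (hp : 2 ≤ p) (hc : 1 ≤ c)
    (h1 : c * p ^ K < x) (h2 : x < c * p ^ (K + 1)) :
    ⌊(Real.log x - Real.log c) / Real.log p⌋ = (K : ℤ) := by
  have hp1 : (1:ℝ) < (p:ℝ) := by exact_mod_cast (by omega : 1 < p)
  have hlogp : 0 < Real.log p := Real.log_pos hp1
  have hc0 : (0:ℝ) < (c:ℝ) := by exact_mod_cast hc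
  have hx0 : (0:ℝ) < (x:ℝ) := by
    have hx : 0 < x := lt_of_le_of_lt (Nat.zero_le _) h1
    exact_mod_cast hx
  have hb1 : Real.log c + (K:ℝ) * Real.log p < Real.log x := by
    calc Real.log c + (K:ℝ) * Real.log p = Real.log ((c:ℝ) * (p:ℝ) ^ K) := by
          rw [Real.log_mul hc0.ne' (by positivity), Real.log_pow]
    _ < Real.log x := by
          apply Real.log_lt_log (by positivity)
          exact_mod_cast h1
  have hb2 : Real.log x < Real.log c + ((K:ℝ) + 1) * Real.log p := by
    calc Real.log x < Real.log ((c:ℝ) * (p:ℝ) ^ (K + 1)) := by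
          apply Real.log_lt_log hx0
          exact_mod_cast h2
    _ = Real.log c + ((K:ℝ) + 1) * Real.log p := by
          rw [Real.log_mul hc0.ne' (by positivity), Real.log_pow]
          push_cast; ring
  rw [Int.floor_eq_iff]
  constructor
  · push_cast
    rw [le_div_iff₀ hlogp]
    nlinarith
  · push_cast
    rw [div_lt_iff₀ hlogp]
    nlinarith

lemma ofDigits_replicate_zero (p k : ℕ) : Nat.ofDigits p (List.replicate k 0) = 0 := by
  induction k with
  | zero => rfl
  | succ k ih => rw [List.replicate_succ, Nat.ofDigits_cons, ih]; simp

lemma geom_sum_nat (p t : ℕ) (hp : 1 ≤ p) :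
    ∑ i ∈ Finset.range t, (p - 1) * p ^ i = p ^ t - 1 := by
  induction t with
  | zero => simp
  | succ t ih =>
    rw [Finset.sum_range_succ, ih, pow_succ]
    have h1 : 1 ≤ p ^ t := Nat.one_le_pow _ _ (by omega)
    have h2 : (p - 1) * p ^ t = p ^ t * p - p ^ t := by
      rw [Nat.sub_mul, one_mul, Nat.mul_comm]
    have h3 : p ^ t ≤ p ^ t * p := Nat.le_mul_of_pos_right _ (by omega)
    omega
theorem sandwich_inequality (g h a m n N : ℕ) (d : ℕ → ℕ)
    (hh : 2 ≤ h) (hg : h < g) (hdvd : h ∣ g)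
    (hm : 0 < m) (hn : m + 1 ≤ n)
    (hd : ∀ i, d i < g)
    (ha : g ^ (n - m - 1) ≤ a) (ha' : a < g ^ (n - m))
    (hN : N = a * g ^ n + ∑ i ∈ Finset.range (n - m), d i * g ^ i)
    (hpalg : IsPalindromeBase g N)
    (hmlog : (m : ℝ) > Real.log ((g : ℝ) * a) / Real.log h)
    (b : ℕ) (hb : b = revDigits h (revDigits g a))
    (k : ℤ) (hk : k = ⌊(Real.log N - Real.log b) / Real.log h⌋)
    (mt : ℤ) (hmt : mt = (m : ℤ) + ⌊Real.log (revDigits g a) / Real.log g⌋ -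
      ⌊Real.log b / Real.log h⌋)
    (hpalh : IsPalindromeBase h N) :
    (b : ℝ) * (h : ℝ) ^ k < (N : ℝ) ∧
      (N : ℝ) < (b : ℝ) * (h : ℝ) ^ k + (h : ℝ) ^ (k - mt) := by
  have hg2 : 2 ≤ g := by omega
  have ha0 : 0 < a := lt_of_lt_of_le (pow_pos (by omega) _) ha |>.trans_le le_rfl
  set S : ℕ := ∑ i ∈ Finset.range (n - m), d i * g ^ i with hSdef
  set A : ℕ := revDigits g a with hAdef
  have hN0 : 0 < N := by
    have : 0 < a * g ^ n := Nat.mul_pos ha0 (pow_pos (by omega) _)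
    omega
  -- digits of a
  have hlen_a : (Nat.digits g a).length = n - m := by
    have h1 := lt_len_of_pow_le hg2 ha
    have h2 := len_le_of_lt_pow hg2 ha'
    omega
  -- bound on S
  have hS : S < g ^ (n - m) := by
    have h1 : S ≤ ∑ i ∈ Finset.range (n - m), (g - 1) * g ^ i := by
      apply Finset.sum_le_sum
      intro i _
      exact Nat.mul_le_mul_right _ (by have := hd i; omega)
    rw [geom_sum_nat g (n - m) (by omega)] at h1
    have : 1 ≤ g ^ (n - m) := Nat.one_le_pow _ _ (by omega)
    omega
  have hlenS : (Nat.digits g S).length ≤ n - m := len_le_of_lt_pow hg2 hS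
  -- digits of N in base g
  have hdigN : Nat.digits g N =
      Nat.digits g S ++ List.replicate (n - (Nat.digits g S).length) 0 ++ Nat.digits g a := by
    rw [Nat.digits_append_zeroes_append_digits (by omega : 1 < g) ha0]
    congr 1
    have : (Nat.digits g S).length + (n - (Nat.digits g S).length) = n := by omega
    rw [this, hN]
    ring
  -- the low part of N equals rev_g(a)
  have htake : (Nat.digits g N).take (n - m) = (Nat.digits g a).reverse := by
    have hpg : Nat.digits g N = (Nat.digits g N).reverse := hpalg
    conv_lhs => rw [hpg, hdigN]
    rw [List.reverse_append, List.reverse_append]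
    exact List.take_left' (by simp [hlen_a])
  have hAS : A = S := by
    have h1 : N % g ^ (n - m) = S := by
      have hdvdpow : g ^ (n - m) ∣ g ^ n := pow_dvd_pow g (by omega)
      obtain ⟨c, hc⟩ := hdvdpow
      have heq : N = S + g ^ (n - m) * (c * a) := by
        rw [hN, hc]; ring
      rw [heq, Nat.add_mul_mod_self_left, Nat.mod_eq_of_lt hS]
    have h2 : N % g ^ (n - m) = Nat.ofDigits g ((Nat.digits g N).take (n - m)) :=
      mod_pow_digits g (n - m) N hg2
    rw [htake] at h2
    rw [hAdef]
    unfold revDigits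
    omega
  -- Part 2: base h analysis
  have hNA : N = A + g ^ n * a := by rw [hN, hAS]; ring
  have hh1 : (1:ℕ) < h := by omega
  have hApos : 0 < A := by
    rw [hAdef]
    unfold revDigits
    have hsum : 1 ≤ ((Nat.digits g a).reverse).sum := by
      by_contra hc
      push_neg at hc
      have hz : ((Nat.digits g a).reverse).sum = 0 := by omega
      rw [List.sum_eq_zero_iff] at hz
      have hne : Nat.digits g a ≠ [] := Nat.digits_ne_nil_iff_ne_zero.mpr ha0.ne'
      have := Nat.getLast_digit_ne_zero g ha0.ne'
      exact this (hz _ (List.mem_reverse.mpr (List.getLast_mem hne)))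
    calc 0 < ((Nat.digits g a).reverse).sum := hsum
    _ ≤ Nat.ofDigits g ((Nat.digits g a).reverse) := Nat.sum_le_ofDigits _ (by omega)
  have hga : g * a < h ^ m := by
    have hlogh : 0 < Real.log h := Real.log_pos (by exact_mod_cast hh1)
    have hga0 : (0:ℝ) < (g:ℝ) * a := by
      have : (0:ℕ) < g * a := Nat.mul_pos (by omega) ha0
      exact_mod_cast this
    have h1 : Real.log ((g:ℝ) * a) < (m:ℝ) * Real.log h := by
      rw [gt_iff_lt, div_lt_iff₀ hlogh] at hmlog
      exact hmlog
    have h2 : (g:ℝ) * a < (h:ℝ) ^ m := by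
      rw [← Real.log_lt_log_iff hga0 (by positivity)]
      rw [Real.log_pow]
      exact h1
    have : ((g * a : ℕ) : ℝ) < ((h ^ m : ℕ) : ℝ) := by push_cast; exact h2
    exact_mod_cast this
  have hA_lt : A < g ^ (n - m) := by
    rw [hAdef]; unfold revDigits
    calc Nat.ofDigits g ((Nat.digits g a).reverse)
        < g ^ ((Nat.digits g a).reverse).length :=
          Nat.ofDigits_lt_base_pow_length (by omega)
            (fun l hl => Nat.digits_lt_base (by omega) (List.mem_reverse.mp hl))
    _ = g ^ (n - m) := by rw [List.length_reverse, hlen_a]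
  have hgnm_le : g ^ (n - m) ≤ g * a := by
    calc g ^ (n - m) = g * g ^ (n - m - 1) := by
          rw [← pow_succ']
          congr 1
          omega
    _ ≤ g * a := Nat.mul_le_mul_left _ ha
  have hAhm : A < h ^ m := by omega
  set lenG : ℕ := (Nat.digits g A).length with hlenGdef
  have hlenG_le : lenG ≤ n - m := len_le_of_lt_pow hg2 hA_lt
  have hlenG_pos : 1 ≤ lenG := by
    rw [hlenGdef]
    have : Nat.digits g A ≠ [] := Nat.digits_ne_nil_iff_ne_zero.mpr hApos.ne'
    exact List.length_pos_iff.mpr this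
  set el : ℕ := m + lenG with heldef
  have hel_n : el ≤ n := by omega
  have hA_el : A < h ^ el := lt_of_lt_of_le hAhm (Nat.pow_le_pow_right (by omega) (by omega))
  have hmodel : N % h ^ el = A := by
    have hdp : h ^ el ∣ g ^ n :=
      dvd_trans (pow_dvd_pow h hel_n) (pow_dvd_pow_of_dvd hdvd n)
    obtain ⟨c, hc⟩ := hdp
    have heq : N = A + h ^ el * (c * a) := by rw [hNA, hc]; ring
    rw [heq, Nat.add_mul_mod_self_left, Nat.mod_eq_of_lt hA_el]
  set q : ℕ := N / h ^ el with hqdef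
  have hq0 : 0 < q := by
    apply Nat.div_pos _ (pow_pos (by omega) _)
    calc h ^ el ≤ h ^ n := Nat.pow_le_pow_right (by omega) hel_n
    _ ≤ g ^ n := Nat.pow_le_pow_left hg.le n
    _ ≤ a * g ^ n := Nat.le_mul_of_pos_left _ ha0
    _ ≤ N := by rw [hN]; omega
  have hNdec : N = A + h ^ el * q := by
    conv_lhs => rw [← Nat.mod_add_div N (h ^ el)]
    rw [hmodel, hqdef]
  set lenA : ℕ := (Nat.digits h A).length with hlenAdef
  have hlenA_le : lenA ≤ m := len_le_of_lt_pow hh hAhm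
  have hlenA_pos : 1 ≤ lenA := by
    rw [hlenAdef]
    have : Nat.digits h A ≠ [] := Nat.digits_ne_nil_iff_ne_zero.mpr hApos.ne'
    exact List.length_pos_iff.mpr this
  have hdigsN : Nat.digits h N =
      Nat.digits h A ++ List.replicate (el - lenA) 0 ++ Nat.digits h q := by
    rw [Nat.digits_append_zeroes_append_digits hh1 hq0]
    congr 1
    rw [hlenAdef]
    rw [show (Nat.digits h A).length + (el - (Nat.digits h A).length) = el from by omega]
    exact hNdec
  set E : List ℕ := Nat.digits h N with hEdef
  set L : ℕ := E.length with hLdef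
  have hE : E = E.reverse := hpalh
  have hLlen : L = el + (Nat.digits h q).length := by
    rw [hLdef, hdigsN]
    simp only [List.length_append, List.length_replicate]
    omega
  have hlq_pos : 1 ≤ (Nat.digits h q).length :=
    List.length_pos_iff.mpr (Nat.digits_ne_nil_iff_ne_zero.mpr hq0.ne')
  have hLel : el < L := by omega
  -- head digit of N in base h is A % h, and it is nonzero
  have hcons : Nat.digits h A = A % h :: Nat.digits h (A / h) := Nat.digits_def' hh1 hApos
  have hEne : E ≠ [] := Nat.digits_ne_nil_iff_ne_zero.mpr hN0.ne'
  have hheadE : E.head? = some (A % h) := by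
    rw [hdigsN, hcons]
    simp
  have hgetLastE : E.getLast? = some (A % h) := by
    rw [List.getLast?_eq_head?_reverse, ← hE]
    exact hheadE
  have hAmod : A % h ≠ 0 := by
    intro h0
    have h1 := Nat.getLast_digit_ne_zero h hN0.ne'
    have h2 : E.getLast? = some (E.getLast hEne) := List.getLast?_eq_getLast _
    rw [hgetLastE] at h2
    injection h2 with h3
    rw [h0] at h3
    exact h1 h3.symm
  -- facts about b
  have hbA : b = Nat.ofDigits h ((Nat.digits h A).reverse) := by
    rw [hb]; rfl
  have hdigb : Nat.digits h b = (Nat.digits h A).reverse := by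
    rw [hbA]
    refine Nat.digits_ofDigits h hh1 _
      (fun l hl => Nat.digits_lt_base hh1 (List.mem_reverse.mp hl)) (fun hne => ?_)
    have h2 : ((Nat.digits h A).reverse).getLast? =
        some (((Nat.digits h A).reverse).getLast hne) := List.getLast?_eq_getLast _
    have h3 : ((Nat.digits h A).reverse).getLast? = some (A % h) := by
      rw [List.getLast?_reverse, hcons]
      simp
    rw [h3] at h2
    injection h2 with h4
    rw [← h4]
    exact hAmod
  have hlen_b : (Nat.digits h b).length = lenA := by
    rw [hdigb, List.length_reverse]
  have hb0 : b ≠ 0 := by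
    intro h0
    rw [h0] at hlen_b
    simp at hlen_b
    omega
  have hb_lt : b < h ^ lenA := by
    calc b < h ^ (Nat.digits h b).length := Nat.lt_base_pow_length_digits hh1
    _ = h ^ lenA := by rw [hlen_b]
  have hlog_b : lenA = Nat.log h b + 1 := by
    rw [← hlen_b]
    exact Nat.digits_len h b hh1 hb0
  have hb_ge : h ^ (lenA - 1) ≤ b := by
    rw [show lenA - 1 = Nat.log h b from by omega]
    exact Nat.pow_log_le_self h hb0
  have hb1 : 1 ≤ b := Nat.pos_of_ne_zero hb0
  -- the split of N at position K
  set K : ℕ := L - lenA with hKdef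
  have hlenA_lt_el : lenA < el := by omega
  have hK_ge : el - lenA + 1 ≤ K := by omega
  have hdrop : E.drop K = (Nat.digits h A).reverse := by
    conv_lhs => rw [hE]
    rw [List.drop_reverse]
    congr 1
    rw [← hLdef, show L - K = lenA from by omega, hdigsN, List.append_assoc]
    exact List.take_left' hlenAdef.symm
  have hNdivK : N / h ^ K = b := by
    rw [Nat.self_div_pow_eq_ofDigits_drop _ _ hh]
    rw [← hEdef, hdrop, ← hbA]
  have htakeK : E.take K = (Nat.digits h q).reverse ++ List.replicate (el - lenA) 0 := by
    conv_lhs => rw [hE]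
    rw [List.take_reverse, ← hLdef, show L - K = lenA from by omega]
    rw [hdigsN, List.append_assoc, List.drop_left' hlenAdef.symm]
    rw [List.reverse_append, List.reverse_replicate]
  have hmodK : N % h ^ K = Nat.ofDigits h ((Nat.digits h q).reverse) := by
    rw [mod_pow_digits h K N hh, ← hEdef, htakeK, Nat.ofDigits_append,
      ofDigits_replicate_zero]
    simp
  have hmodK_lt : N % h ^ K < h ^ (L - el) := by
    rw [hmodK]
    calc Nat.ofDigits h ((Nat.digits h q).reverse)
        < h ^ ((Nat.digits h q).reverse).length :=
          Nat.ofDigits_lt_base_pow_length hh1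
            (fun l hl => Nat.digits_lt_base hh1 (List.mem_reverse.mp hl))
    _ = h ^ (L - el) := by rw [List.length_reverse]; congr 1; omega
  have hmodK_pos : 0 < N % h ^ K := by
    have h1 : (N % h ^ K) % h = N % h := by
      have : (h:ℕ) ∣ h ^ K := dvd_pow_self h (by omega : K ≠ 0)
      exact Nat.mod_mod_of_dvd N this
    have h2 : N % h = A % h := by
      have heq : N = A + h * (h ^ (el - 1) * q) := by
        rw [hNdec]
        rw [show h ^ el = h * h ^ (el - 1) from by
          rw [← pow_succ']; congr 1; omega]
        ring
      rw [heq, Nat.add_mul_mod_self_left]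
    by_contra hc
    push_neg at hc
    have h3 : N % h ^ K = 0 := by omega
    rw [h3] at h1
    simp at h1
    rw [h2] at h1
    exact hAmod h1.symm
  -- the sandwich in ℕ
  have hsplit : N = b * h ^ K + N % h ^ K := by
    conv_lhs => rw [← Nat.div_add_mod N (h ^ K)]
    rw [hNdivK]
    ring
  have hlow : b * h ^ K < N := by omega
  have hhigh : N < b * h ^ K + h ^ (L - el) := by omega
  -- value of k
  have hLK : L - el ≤ K := by omega
  have hk_eq : k = (K : ℤ) := by
    rw [hk]
    apply floor_sub_log h b N K hh hb1 hlow
    calc N < b * h ^ K + h ^ (L - el) := hhigh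
    _ ≤ b * h ^ K + h ^ K := by
          have := Nat.pow_le_pow_right (by omega : 1 ≤ h) hLK
          omega
    _ = (b + 1) * h ^ K := by ring
    _ ≤ (b * h) * h ^ K := by
          apply Nat.mul_le_mul_right
          have : b * 2 ≤ b * h := Nat.mul_le_mul_left b hh
          omega
    _ = b * h ^ (K + 1) := by ring
  -- value of mt
  have hlog_A : lenG = Nat.log g A + 1 := Nat.digits_len g A (by omega) hApos.ne'
  have hmt_eq : mt = (el : ℤ) - (lenA : ℤ) := by
    rw [hmt, floor_log_div g A hg2 hApos.ne', floor_log_div h b hh hb0]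
    omega
  have hkmt : k - mt = ((L - el : ℕ) : ℤ) := by
    rw [hk_eq, hmt_eq]
    omega
  -- conclusion
  have hNcast : ((b * h ^ K : ℕ) : ℝ) = (b : ℝ) * (h : ℝ) ^ (K : ℕ) := by push_cast; ring
  constructor
  · rw [hk_eq, zpow_natCast]
    rw [← hNcast]
    exact_mod_cast hlow
  · rw [hkmt, hk_eq, zpow_natCast, zpow_natCast]
    have : ((b * h ^ K + h ^ (L - el) : ℕ) : ℝ) =
        (b : ℝ) * (h : ℝ) ^ (K : ℕ) + (h : ℝ) ^ (L - el) := by push_cast; ring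
    rw [← this]
    exact_mod_cast hhigh
end
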